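/- Let f₁, f₂, log σ₁, log σ₂: [0,1] → ℝ be bounded measurable functions with σᵢ(u) = exp(log σᵢ(u)) > 0, and define the mixture densities p_i(y) = ∫₀¹ φ_{σᵢ(u)}(y − fᵢ(u)) du. Then the squared Hellinger distance satisfies h²(p₁, p₂) ≤ 2‖log σ₁ − log σ₂‖_∞ + ‖f₁ − f₂‖_∞²/(2 · inf_u min(σ₁(u), σ₂(u))²). -/

import Mathlib

/-!
Squared Hellinger distance is jointly convex: pointwise in `y`, Minkowski's inequality in
`L²(du)` gives
`(√p₁(y) - √p₂(y))² ≤ ∫₀¹ (√φ_{σ₁(u)}(y - f₁(u)) - √φ_{σ₂(u)}(y - f₂(u)))² du`,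
so after Tonelli `h²(p₁, p₂)` is at most the average over `u` of the squared Hellinger
distance between the two Gaussian components. Between `N(a, σ₁²)` and `N(b, σ₂²)` that
distance is `2 - 2ρ` with the affinity
`ρ = √(2σ₁σ₂ / (σ₁² + σ₂²)) · exp (-(a - b)² / (4(σ₁² + σ₂²)))`. Since
`2σ₁σ₂ / (σ₁² + σ₂²) ≥ exp (-|log σ₁ - log σ₂|)` and `1 - e⁻ˣ ≤ x`, we get
`2 - 2ρ ≤ |log σ₁ - log σ₂| + (a - b)² / (2(σ₁² + σ₂²))`.
-/

open MeasureTheory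

noncomputable def gaussianPDF (σ z : ℝ) : ℝ :=
  (Real.sqrt (2 * Real.pi * σ ^ 2))⁻¹ * Real.exp (-z ^ 2 / (2 * σ ^ 2))

open Real

lemma sq_sqrt_sub_sqrt {a b : ℝ} (ha : 0 ≤ a) (hb : 0 ≤ b) :
    (√a - √b) ^ 2 = a + b - 2 * √(a * b) := by
  rw [sub_sq, Real.sq_sqrt ha, Real.sq_sqrt hb, Real.sqrt_mul ha]
  ring

section SqrtIntegral

variable {α : Type*} [MeasurableSpace α] {μ : Measure α} {f g : α → ℝ}

lemma integral_le_of_lintegral_ofReal_le {b : ℝ} (hb : 0 ≤ b) (hf : 0 ≤ f)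
    (h : ∫⁻ x, ENNReal.ofReal (f x) ∂μ ≤ ENNReal.ofReal b) : ∫ x, f x ∂μ ≤ b := by
  by_cases hfi : Integrable f μ
  · rwa [← ofReal_integral_eq_lintegral_ofReal hfi (ae_of_all _ hf),
      ENNReal.ofReal_le_ofReal_iff hb] at h
  · rwa [integral_undef hfi]

lemma integrable_sqrt_mul (hf0 : 0 ≤ f) (hg0 : 0 ≤ g) (hf : Integrable f μ)
    (hg : Integrable g μ) : Integrable (fun x => √(f x * g x)) μ := by
  refine ((hf.add hg).div_const 2).mono' (continuous_sqrt.comp_aestronglyMeasurable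
    (hf.aestronglyMeasurable.mul hg.aestronglyMeasurable)) (ae_of_all _ fun x => ?_)
  rw [Real.norm_of_nonneg (Real.sqrt_nonneg _), Pi.add_apply]
  nlinarith [sq_sqrt_sub_sqrt (hf0 x) (hg0 x), sq_nonneg (√(f x) - √(g x))]

lemma integrable_sq_sqrt_sub_sqrt (hf0 : 0 ≤ f) (hg0 : 0 ≤ g) (hf : Integrable f μ)
    (hg : Integrable g μ) : Integrable (fun x => (√(f x) - √(g x)) ^ 2) μ := by
  simp_rw [sq_sqrt_sub_sqrt (hf0 _) (hg0 _)]
  exact (hf.add hg).sub ((integrable_sqrt_mul hf0 hg0 hf hg).const_mul 2)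

lemma integral_sq_sqrt_sub_sqrt (hf0 : 0 ≤ f) (hg0 : 0 ≤ g) (hf : Integrable f μ)
    (hg : Integrable g μ) :
    ∫ x, (√(f x) - √(g x)) ^ 2 ∂μ = ∫ x, f x ∂μ + ∫ x, g x ∂μ - 2 * ∫ x, √(f x * g x) ∂μ := by
  simp_rw [sq_sqrt_sub_sqrt (hf0 _) (hg0 _)]
  rw [integral_sub (f := fun x => f x + g x) (hf.add hg)
    ((integrable_sqrt_mul hf0 hg0 hf hg).const_mul 2), integral_add hf hg, integral_const_mul]

lemma integral_sqrt_mul_le (hf0 : 0 ≤ f) (hg0 : 0 ≤ g) (hf : Integrable f μ)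
    (hg : Integrable g μ) : ∫ x, √(f x * g x) ∂μ ≤ √((∫ x, f x ∂μ) * ∫ x, g x ∂μ) := by
  have memLp_sqrt : ∀ {h : α → ℝ}, 0 ≤ h → Integrable h μ →
      MemLp (fun x => √(h x)) (ENNReal.ofReal 2) μ := fun {h} h0 hi => by
    rw [ENNReal.ofReal_ofNat, memLp_two_iff_integrable_sq
      (continuous_sqrt.comp_aestronglyMeasurable hi.aestronglyMeasurable)]
    exact hi.congr (ae_of_all _ fun x => (Real.sq_sqrt (h0 x)).symm)
  have holder := integral_mul_le_Lp_mul_Lq_of_nonneg Real.HolderConjugate.two_two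
    (ae_of_all μ fun x => Real.sqrt_nonneg (f x)) (ae_of_all μ fun x => Real.sqrt_nonneg (g x))
    (memLp_sqrt hf0 hf) (memLp_sqrt hg0 hg)
  rw [Real.sqrt_mul (integral_nonneg hf0)]
  simpa only [Real.rpow_two, Real.sq_sqrt (hf0 _), Real.sq_sqrt (hg0 _),
    ← Real.sqrt_eq_rpow, ← Real.sqrt_mul (hf0 _)] using holder

lemma sq_sqrt_integral_sub_sqrt_integral_le (hf0 : 0 ≤ f) (hg0 : 0 ≤ g) (hf : Integrable f μ)
    (hg : Integrable g μ) :
    (√(∫ x, f x ∂μ) - √(∫ x, g x ∂μ)) ^ 2 ≤ ∫ x, (√(f x) - √(g x)) ^ 2 ∂μ := by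
  rw [integral_sq_sqrt_sub_sqrt hf0 hg0 hf hg,
    sq_sqrt_sub_sqrt (integral_nonneg hf0) (integral_nonneg hg0)]
  linarith [integral_sqrt_mul_le hf0 hg0 hf hg]

end SqrtIntegral

lemma lintegral_sq_sqrt_integral_sub_sqrt_integral_le {U Y : Type*} [MeasurableSpace U]
    [MeasurableSpace Y] {μ : Measure U} {ν : Measure Y} [SFinite μ] [SFinite ν] {F G : U × Y → ℝ}
    (hF0 : 0 ≤ F) (hG0 : 0 ≤ G) (hF : Integrable F (μ.prod ν)) (hG : Integrable G (μ.prod ν)) :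
    ∫⁻ y, ENNReal.ofReal ((√(∫ u, F (u, y) ∂μ) - √(∫ u, G (u, y) ∂μ)) ^ 2) ∂ν
      ≤ ∫⁻ u, ∫⁻ y, ENNReal.ofReal ((√(F (u, y)) - √(G (u, y))) ^ 2) ∂ν ∂μ := by
  have hmeas :
      AEMeasurable (fun p : U × Y => ENNReal.ofReal ((√(F p) - √(G p)) ^ 2)) (μ.prod ν) :=
    ENNReal.measurable_ofReal.comp_aemeasurable
      ((hF.aemeasurable.sqrt.sub hG.aemeasurable.sqrt).pow_const 2)
  rw [lintegral_lintegral_swap hmeas]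
  refine lintegral_mono_ae ?_
  filter_upwards [hF.prod_left_ae, hG.prod_left_ae] with y hFy hGy
  have hFy0 : 0 ≤ fun u => F (u, y) := fun u => hF0 (u, y)
  have hGy0 : 0 ≤ fun u => G (u, y) := fun u => hG0 (u, y)
  rw [← ofReal_integral_eq_lintegral_ofReal (integrable_sq_sqrt_sub_sqrt hFy0 hGy0 hFy hGy)
    (ae_of_all _ fun u => sq_nonneg _)]
  exact ENNReal.ofReal_le_ofReal (sq_sqrt_integral_sub_sqrt_integral_le hFy0 hGy0 hFy hGy)

lemma exp_neg_abs_log_sub_log_le {σ₁ σ₂ : ℝ} (h₁ : 0 < σ₁) (h₂ : 0 < σ₂) :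
    exp (-|log σ₁ - log σ₂|) ≤ 2 * σ₁ * σ₂ / (σ₁ ^ 2 + σ₂ ^ 2) := by
  set t := log σ₁ - log σ₂
  have hσ₁ : σ₁ = σ₂ * exp t := by
    rw [Real.exp_sub, Real.exp_log h₁, Real.exp_log h₂]; field_simp
  have ht₁ : exp (-|t|) * exp t ≤ 1 := by
    rw [← Real.exp_add, Real.exp_le_one_iff]; linarith [le_abs_self t]
  have ht₂ : exp (-|t|) ≤ exp t := by
    rw [Real.exp_le_exp]; linarith [neg_abs_le t]
  rw [le_div_iff₀ (by positivity), hσ₁]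
  have hσ₂ : 0 < σ₂ ^ 2 := by positivity
  nlinarith [mul_le_mul_of_nonneg_left ht₁ (by positivity : 0 ≤ σ₂ ^ 2 * exp t),
    mul_le_mul_of_nonneg_left ht₂ hσ₂.le]

lemma one_sub_sqrt_le_abs_log_sub_log {σ₁ σ₂ : ℝ} (h₁ : 0 < σ₁) (h₂ : 0 < σ₂) :
    1 - √(2 * σ₁ * σ₂ / (σ₁ ^ 2 + σ₂ ^ 2)) ≤ |log σ₁ - log σ₂| / 2 := by
  have h := Real.sqrt_le_sqrt (exp_neg_abs_log_sub_log_le h₁ h₂)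
  rw [← Real.exp_half, neg_div] at h
  linarith [Real.one_sub_le_exp_neg (|log σ₁ - log σ₂| / 2)]

lemma gaussianPDF_nonneg (σ z : ℝ) : 0 ≤ gaussianPDF σ z := by
  unfold gaussianPDF; positivity

lemma gaussianPDF_sub_eq_gaussianPDFReal (σ a y : ℝ) :
    gaussianPDF σ (y - a) = ProbabilityTheory.gaussianPDFReal a (σ ^ 2).toNNReal y := by
  rw [gaussianPDF, ProbabilityTheory.gaussianPDFReal, Real.coe_toNNReal _ (sq_nonneg σ)]

lemma integrable_gaussianPDF_sub (σ a : ℝ) : Integrable fun y => gaussianPDF σ (y - a) := by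
  simpa only [gaussianPDF_sub_eq_gaussianPDFReal] using
    ProbabilityTheory.integrable_gaussianPDFReal a _

lemma integral_gaussianPDF_sub {σ : ℝ} (hσ : σ ≠ 0) (a : ℝ) :
    ∫ y, gaussianPDF σ (y - a) = 1 := by
  simp only [gaussianPDF_sub_eq_gaussianPDFReal]
  exact ProbabilityTheory.integral_gaussianPDFReal_eq_one a (by simpa [sq_pos_iff] using hσ)

lemma measurable_gaussianPDF : Measurable fun p : ℝ × ℝ => gaussianPDF p.1 p.2 := by
  unfold gaussianPDF; fun_prop

noncomputable def gaussianAffinity (σ₁ σ₂ a b : ℝ) : ℝ :=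
  √(2 * σ₁ * σ₂ / (σ₁ ^ 2 + σ₂ ^ 2)) * exp (-(a - b) ^ 2 / (4 * (σ₁ ^ 2 + σ₂ ^ 2)))

/-- Completing the square in `y`. -/
lemma sqrt_gaussianPDF_mul_gaussianPDF {σ₁ σ₂ : ℝ} (h₁ : 0 < σ₁) (h₂ : 0 < σ₂) (a b y : ℝ) :
    √(gaussianPDF σ₁ (y - a) * gaussianPDF σ₂ (y - b))
      = (√(2 * π * (σ₁ * σ₂)))⁻¹ * exp (-(a - b) ^ 2 / (4 * (σ₁ ^ 2 + σ₂ ^ 2)))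
        * exp (-((σ₁ ^ 2 + σ₂ ^ 2) / (4 * σ₁ ^ 2 * σ₂ ^ 2))
            * (y - (a * σ₂ ^ 2 + b * σ₁ ^ 2) / (σ₁ ^ 2 + σ₂ ^ 2)) ^ 2) := by
  have hprod : √(2 * π * σ₁ ^ 2) * √(2 * π * σ₂ ^ 2) = 2 * π * (σ₁ * σ₂) := by
    rw [← Real.sqrt_mul (by positivity), show 2 * π * σ₁ ^ 2 * (2 * π * σ₂ ^ 2)
      = (2 * π * (σ₁ * σ₂)) ^ 2 by ring, Real.sqrt_sq (by positivity)]
  rw [gaussianPDF, gaussianPDF, mul_mul_mul_comm, ← mul_inv, hprod, ← Real.exp_add,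
    Real.sqrt_mul (by positivity), Real.sqrt_inv, ← Real.exp_half,
    mul_assoc (√(2 * π * (σ₁ * σ₂)))⁻¹, ← Real.exp_add]
  congr 2
  field_simp
  ring

lemma integral_sqrt_gaussianPDF_mul_gaussianPDF {σ₁ σ₂ : ℝ} (h₁ : 0 < σ₁) (h₂ : 0 < σ₂)
    (a b : ℝ) :
    ∫ y, √(gaussianPDF σ₁ (y - a) * gaussianPDF σ₂ (y - b)) = gaussianAffinity σ₁ σ₂ a b := by
  simp_rw [sqrt_gaussianPDF_mul_gaussianPDF h₁ h₂]
  rw [integral_const_mul, integral_sub_right_eq_self (fun z => exp (-_ * z ^ 2)),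
    integral_gaussian, gaussianAffinity, mul_right_comm, ← Real.sqrt_inv,
    ← Real.sqrt_mul (by positivity)]
  congr 2
  field_simp
  ring

lemma lintegral_sq_sqrt_gaussianPDF_sub_sqrt_gaussianPDF {σ₁ σ₂ : ℝ} (h₁ : 0 < σ₁)
    (h₂ : 0 < σ₂) (a b : ℝ) :
    ∫⁻ y, ENNReal.ofReal ((√(gaussianPDF σ₁ (y - a)) - √(gaussianPDF σ₂ (y - b))) ^ 2)
      = ENNReal.ofReal (2 - 2 * gaussianAffinity σ₁ σ₂ a b) := by
  have h₁0 : 0 ≤ fun y => gaussianPDF σ₁ (y - a) := fun y => gaussianPDF_nonneg _ _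
  have h₂0 : 0 ≤ fun y => gaussianPDF σ₂ (y - b) := fun y => gaussianPDF_nonneg _ _
  have hi₁ := integrable_gaussianPDF_sub σ₁ a
  have hi₂ := integrable_gaussianPDF_sub σ₂ b
  rw [← ofReal_integral_eq_lintegral_ofReal (integrable_sq_sqrt_sub_sqrt h₁0 h₂0 hi₁ hi₂)
      (ae_of_all _ fun y => sq_nonneg _), integral_sq_sqrt_sub_sqrt h₁0 h₂0 hi₁ hi₂,
    integral_gaussianPDF_sub h₁.ne', integral_gaussianPDF_sub h₂.ne',
    integral_sqrt_gaussianPDF_mul_gaussianPDF h₁ h₂]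
  norm_num

lemma two_sub_two_mul_gaussianAffinity_le {σ₁ σ₂ : ℝ} (h₁ : 0 < σ₁) (h₂ : 0 < σ₂) (a b : ℝ) :
    2 - 2 * gaussianAffinity σ₁ σ₂ a b
      ≤ |log σ₁ - log σ₂| + (a - b) ^ 2 / (2 * (σ₁ ^ 2 + σ₂ ^ 2)) := by
  set r := √(2 * σ₁ * σ₂ / (σ₁ ^ 2 + σ₂ ^ 2))
  set x := (a - b) ^ 2 / (4 * (σ₁ ^ 2 + σ₂ ^ 2))
  have hr₀ : 0 ≤ r := Real.sqrt_nonneg _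
  have hr₁ : r ≤ 1 := Real.sqrt_le_one.2 <| (div_le_one (by positivity)).2 <| by
    nlinarith [sq_nonneg (σ₁ - σ₂)]
  have hx : 0 ≤ x := by positivity
  have hexp : 1 - x ≤ exp (-x) := Real.one_sub_le_exp_neg x
  have hexp₁ : exp (-x) ≤ 1 := Real.exp_le_one_iff.2 (neg_nonpos.2 hx)
  have hrx : 2 * x = (a - b) ^ 2 / (2 * (σ₁ ^ 2 + σ₂ ^ 2)) := by
    simp only [x]; field_simp; ring
  have hgauss : gaussianAffinity σ₁ σ₂ a b = r * exp (-x) := by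
    rw [gaussianAffinity, neg_div]
  rw [hgauss, ← hrx]
  nlinarith [one_sub_sqrt_le_abs_log_sub_log h₁ h₂, mul_le_mul_of_nonneg_left
    (sub_nonneg.2 hexp₁) hr₀]

lemma integrable_prod_gaussianPDF_sub {U : Type*} [MeasurableSpace U] {μ : Measure U}
    [IsFiniteMeasure μ] {s f : U → ℝ} (hs : Measurable s) (hf : Measurable f)
    (hs₀ : ∀ᵐ u ∂μ, s u ≠ 0) :
    Integrable (fun p : U × ℝ => gaussianPDF (s p.1) (p.2 - f p.1)) (μ.prod volume) := by
  have hmeas : Measurable fun p : U × ℝ => gaussianPDF (s p.1) (p.2 - f p.1) :=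
    measurable_gaussianPDF.comp ((hs.comp measurable_fst).prodMk
      (measurable_snd.sub (hf.comp measurable_fst)))
  rw [integrable_prod_iff hmeas.aestronglyMeasurable]
  constructor
  · exact ae_of_all _ fun u => integrable_gaussianPDF_sub (s u) (f u)
  · refine (integrable_const (1 : ℝ)).congr ?_
    filter_upwards [hs₀] with u hu
    simp only [Real.norm_of_nonneg (gaussianPDF_nonneg _ _), integral_gaussianPDF_sub hu]

lemma two_sub_two_mul_gaussianAffinity_le_of_le {σ₁ σ₂ a b A B c : ℝ} (hc : 0 < c)
    (hσ : c ≤ min σ₁ σ₂) (hA : |log σ₁ - log σ₂| ≤ A) (hB : |a - b| ≤ B) :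
    2 - 2 * gaussianAffinity σ₁ σ₂ a b ≤ 2 * A + B ^ 2 / (2 * c ^ 2) := by
  have h₁ : c ≤ σ₁ := hσ.trans (min_le_left _ _)
  have h₂ : c ≤ σ₂ := hσ.trans (min_le_right _ _)
  have hab : (a - b) ^ 2 / (2 * (σ₁ ^ 2 + σ₂ ^ 2)) ≤ B ^ 2 / (2 * c ^ 2) :=
    div_le_div₀ (sq_nonneg B) (sq_le_sq' (neg_le_of_abs_le hB) (le_of_abs_le hB))
      (by positivity) (by nlinarith)
  linarith [two_sub_two_mul_gaussianAffinity_le (hc.trans_le h₁) (hc.trans_le h₂) a b,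
    (abs_nonneg _).trans hA]

theorem hellinger_mixture_bound_general
    (f₁ f₂ s₁ s₂ : ℝ → ℝ) (A B c : ℝ) (hc : 0 < c)
    (hm1 : Measurable f₁) (hm2 : Measurable f₂)
    (hs1 : Measurable s₁) (hs2 : Measurable s₂)
    (hclow : ∀ u ∈ Set.Icc (0 : ℝ) 1, c ≤ min (s₁ u) (s₂ u))
    (hA : ∀ u ∈ Set.Icc (0 : ℝ) 1, |Real.log (s₁ u) - Real.log (s₂ u)| ≤ A)
    (hB : ∀ u ∈ Set.Icc (0 : ℝ) 1, |f₁ u - f₂ u| ≤ B) :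
    ∫ y : ℝ,
        (Real.sqrt (∫ u in (0 : ℝ)..1, gaussianPDF (s₁ u) (y - f₁ u))
          - Real.sqrt (∫ u in (0 : ℝ)..1, gaussianPDF (s₂ u) (y - f₂ u))) ^ 2
      ≤ 2 * A + B ^ 2 / (2 * c ^ 2) := by
  have hpos : ∀ u ∈ Set.Ioc (0 : ℝ) 1, 0 < s₁ u ∧ 0 < s₂ u := fun u hu =>
    lt_min_iff.1 (hc.trans_le (hclow u (Set.Ioc_subset_Icc_self hu)))
  have hpos_ae : ∀ᵐ u ∂volume.restrict (Set.Ioc (0 : ℝ) 1), 0 < s₁ u ∧ 0 < s₂ u :=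
    ae_restrict_of_forall_mem measurableSet_Ioc hpos
  have hbound : 0 ≤ 2 * A + B ^ 2 / (2 * c ^ 2) := by
    have := (abs_nonneg _).trans (hA 0 ⟨le_rfl, zero_le_one⟩)
    positivity
  simp only [intervalIntegral.integral_of_le zero_le_one]
  refine integral_le_of_lintegral_ofReal_le hbound (fun y => sq_nonneg _) ?_
  calc _ ≤ ∫⁻ u in Set.Ioc 0 1, ∫⁻ y, ENNReal.ofReal
          ((√(gaussianPDF (s₁ u) (y - f₁ u)) - √(gaussianPDF (s₂ u) (y - f₂ u))) ^ 2) :=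
        lintegral_sq_sqrt_integral_sub_sqrt_integral_le
          (F := fun p => gaussianPDF (s₁ p.1) (p.2 - f₁ p.1))
          (G := fun p => gaussianPDF (s₂ p.1) (p.2 - f₂ p.1)) (fun _ => gaussianPDF_nonneg _ _)
          (fun _ => gaussianPDF_nonneg _ _)
          (integrable_prod_gaussianPDF_sub hs1 hm1 (hpos_ae.mono fun u hu => hu.1.ne'))
          (integrable_prod_gaussianPDF_sub hs2 hm2 (hpos_ae.mono fun u hu => hu.2.ne'))
    _ ≤ ∫⁻ _ in Set.Ioc (0 : ℝ) 1, ENNReal.ofReal (2 * A + B ^ 2 / (2 * c ^ 2)) := by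
        refine setLIntegral_mono' measurableSet_Ioc fun u hu => ?_
        have hu' := Set.Ioc_subset_Icc_self hu
        rw [lintegral_sq_sqrt_gaussianPDF_sub_sqrt_gaussianPDF (hpos u hu).1 (hpos u hu).2]
        exact ENNReal.ofReal_le_ofReal
          (two_sub_two_mul_gaussianAffinity_le_of_le hc (hclow u hu') (hA u hu') (hB u hu'))
    _ = ENNReal.ofReal (2 * A + B ^ 2 / (2 * c ^ 2)) := by simp [Real.volume_Ioc]

/-- For bounded measurable location functions `f₁, f₂` and bounded measurable log-bandwidth
functions with `σᵢ(u) ≥ c > 0`, `|log σ₁ − log σ₂| ≤ A` and `|f₁ − f₂| ≤ B` on `[0,1]`, the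
squared Hellinger distance between the mixture densities
`pᵢ(y) = ∫₀¹ φ_{σᵢ(u)}(y − fᵢ(u)) du` satisfies `h²(p₁,p₂) ≤ 2A + B²/(2c²)`. -/
theorem hellinger_mixture_bound
    (f₁ f₂ s₁ s₂ : ℝ → ℝ) (A B c : ℝ) (hc : 0 < c)
    (hm1 : Measurable f₁) (hm2 : Measurable f₂)
    (hs1 : Measurable s₁) (hs2 : Measurable s₂)
    (hfb : ∃ K, ∀ u, |f₁ u| ≤ K ∧ |f₂ u| ≤ K)
    (hsb : ∃ K, ∀ u, s₁ u ≤ K ∧ s₂ u ≤ K)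
    (hspos : ∀ u, 0 < s₁ u ∧ 0 < s₂ u)
    (hclow : ∀ u ∈ Set.Icc (0 : ℝ) 1, c ≤ min (s₁ u) (s₂ u))
    (hA : ∀ u ∈ Set.Icc (0 : ℝ) 1, |Real.log (s₁ u) - Real.log (s₂ u)| ≤ A)
    (hB : ∀ u ∈ Set.Icc (0 : ℝ) 1, |f₁ u - f₂ u| ≤ B) :
    ∫ y : ℝ,
        (Real.sqrt (∫ u in (0 : ℝ)..1, gaussianPDF (s₁ u) (y - f₁ u))
          - Real.sqrt (∫ u in (0 : ℝ)..1, gaussianPDF (s₂ u) (y - f₂ u))) ^ 2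
      ≤ 2 * A + B ^ 2 / (2 * c ^ 2) :=
  hellinger_mixture_bound_general f₁ f₂ s₁ s₂ A B c hc hm1 hm2 hs1 hs2 hclow hA hB
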